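/- arXiv:1703.05026 — 3 statements merged into one kernel-verified Lean document; each statement's English description precedes it below -/
import Mathlib

section
/- Let K be a field of characteristic 2, θ a Tits endomorphism of K, L = K(γ) a quadratic extension where γ² + γ + δ = 0 with δ ∈ K, and χ the nontrivial element of Gal(L/K). If θ₁ is a Tits endomorphism of L extending θ, then θ₁ commutes with χ, and χ∘θ₁ is also a Tits endomorphism of L extending θ; moreover these are the only two extensions of θ to a Tits endomorphism of L. -/
/-!
Write every element of `L` as `a + bγ`. If `θ₁` is a Tits endomorphism extending `θ` and
`θ₁ γ = α + βγ`, comparing coefficients in `θ₁ (θ₁ γ) = γ² = γ + δ` gives `θ β · β = 1`,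
which forces `β = 1` (apply `θ` once more), and then `θ α + α = δ`. So an extension is
determined by a solution `α` of `θ α + α = δ`, and two solutions differ by some `u` with
`θ u = u`, hence `u² = θ (θ u) = u`, i.e. `u ∈ {0, 1}`; the solution `α + 1` corresponds
to `χ ∘ θ₁`.
-/

def IsTitsEndomorphism {R : Type*} [Semiring R] (θ : R →+* R) : Prop :=
  ∀ x, θ (θ x) = x ^ 2

namespace IsTitsEndomorphism

theorem two_eq_zero {R : Type*} [CommRing R] {θ : R →+* R} (hθ : IsTitsEndomorphism θ) :
    (2 : R) = 0 := by
  have h := hθ 2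
  simp only [map_ofNat] at h
  linear_combination -h

variable {R : Type*} [Field R] {θ : R →+* R}

theorem eq_one_of_map_mul_self_eq_neg_one (hθ : IsTitsEndomorphism θ) {β : R}
    (hβ : θ β * β = -1) : β = 1 := by
  have hβ0 : β ≠ 0 := by rintro rfl; simp at hβ
  have hθβ0 : θ β ≠ 0 := by intro h; simp [h] at hβ
  have hθθ : β ^ 2 * θ β = -1 := by rw [← hθ, ← map_mul, hβ, map_neg, map_one]
  have : β * θ β * (β - 1) = 0 := by linear_combination hθθ - hβ
  simpa [hβ0, hθβ0, sub_eq_zero] using this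

theorem eq_or_eq_add_one_of_map_add_self_eq (hθ : IsTitsEndomorphism θ) {α β c : R}
    (hα : θ α + α = c) (hβ : θ β + β = c) : β = α ∨ β = α + 1 := by
  have hu : θ (β - α) = -(β - α) := by rw [map_sub]; linear_combination hβ - hα
  have hu2 : (β - α) ^ 2 = β - α := by rw [← hθ, hu, map_neg, hu, neg_neg]
  rcases mul_eq_zero.mp (show (β - α) * (β - α - 1) = 0 by linear_combination hu2) with h | h
  · exact .inl (by linear_combination h)
  · exact .inr (by linear_combination h)

end IsTitsEndomorphism

section QuadraticBasis

variable {K L : Type*} [Field K] [CommRing L] [Algebra K L] {γ : L}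

theorem coeffs_eq_of_notMem_range [Nontrivial L] (hirr : γ ∉ Set.range (algebraMap K L))
    {a b c d : K}
    (h : algebraMap K L a + algebraMap K L b * γ = algebraMap K L c + algebraMap K L d * γ) :
    a = c ∧ b = d := by
  by_cases hbd : b = d
  · subst hbd
    exact ⟨(algebraMap K L).injective (add_right_cancel h), rfl⟩
  · refine absurd ⟨(c - a) / (b - d), ?_⟩ hirr
    have hu : algebraMap K L (b - d)⁻¹ * (algebraMap K L b - algebraMap K L d) = 1 := by
      rw [← map_sub, ← map_mul, inv_mul_cancel₀ (sub_ne_zero.mpr hbd), map_one]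
    rw [div_eq_mul_inv, map_mul, map_sub]
    linear_combination γ * hu - algebraMap K L (b - d)⁻¹ * h

theorem ringHom_ext_of_forall_eq_add_mul {M : Type*} [Semiring M]
    (hspan : ∀ z : L, ∃ a b : K, z = algebraMap K L a + algebraMap K L b * γ) {f g : L →+* M}
    (hK : ∀ a : K, f (algebraMap K L a) = g (algebraMap K L a)) (hγ : f γ = g γ) : f = g := by
  ext z
  obtain ⟨a, b, rfl⟩ := hspan z
  simp only [map_add, map_mul, hK, hγ]

theorem exists_apply_eq_add_of_isTitsEndomorphism [Nontrivial L] {θ : K →+* K}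
    (hθ : IsTitsEndomorphism θ) {δ : K} (hγ : γ ^ 2 + γ + algebraMap K L δ = 0)
    (hirr : γ ∉ Set.range (algebraMap K L))
    (hspan : ∀ z : L, ∃ a b : K, z = algebraMap K L a + algebraMap K L b * γ) {f : L →+* L}
    (hf : IsTitsEndomorphism f) (hfK : ∀ a : K, f (algebraMap K L a) = algebraMap K L (θ a)) :
    ∃ α : K, θ α + α = -δ ∧ f γ = γ + algebraMap K L α := by
  obtain ⟨α, β, hfγ⟩ := hspan (f γ)
  have hffγ : algebraMap K L (θ α + θ β * α) + algebraMap K L (θ β * β) * γ =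
      algebraMap K L (-δ) + algebraMap K L (-1) * γ := by
    have h := hf γ
    rw [hfγ, map_add, map_mul, hfK, hfK, hfγ] at h
    simp only [map_add, map_mul, map_neg, map_one]
    linear_combination h + hγ
  obtain ⟨hα, hβ⟩ := coeffs_eq_of_notMem_range hirr hffγ
  obtain rfl := hθ.eq_one_of_map_mul_self_eq_neg_one hβ
  refine ⟨α, by simpa using hα, ?_⟩
  rw [hfγ, map_one, one_mul, add_comm]

end QuadraticBasis

theorem tits_extensions_pair_general {K L : Type*} [Field K] [Field L]
    [Algebra K L] (θ : K →+* K) (hθ : ∀ x : K, θ (θ x) = x ^ 2)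
    (δ : K) (γ : L) (hγ : γ ^ 2 + γ + algebraMap K L δ = 0)
    (hirr : γ ∉ Set.range (algebraMap K L))
    (hspan : ∀ z : L, ∃ a b : K, z = algebraMap K L a + algebraMap K L b * γ)
    (χ : L →+* L) (hχK : ∀ a : K, χ (algebraMap K L a) = algebraMap K L a)
    (hχγ : χ γ = γ + 1)
    (θ₁ : L →+* L) (hext : ∀ a : K, θ₁ (algebraMap K L a) = algebraMap K L (θ a))
    (hθ₁ : ∀ z : L, θ₁ (θ₁ z) = z ^ 2) :
    (∀ z : L, θ₁ (χ z) = χ (θ₁ z)) ∧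
    (∀ a : K, (χ.comp θ₁) (algebraMap K L a) = algebraMap K L (θ a)) ∧
    (∀ z : L, (χ.comp θ₁) ((χ.comp θ₁) z) = z ^ 2) ∧
    (∀ θ₂ : L →+* L,
      (∀ a : K, θ₂ (algebraMap K L a) = algebraMap K L (θ a)) →
      (∀ z : L, θ₂ (θ₂ z) = z ^ 2) → θ₂ = θ₁ ∨ θ₂ = χ.comp θ₁) := by
  obtain ⟨α, hα, hθ₁γ⟩ :=
    exists_apply_eq_add_of_isTitsEndomorphism hθ hγ hirr hspan hθ₁ hext
  have hextχ : ∀ a : K, (χ.comp θ₁) (algebraMap K L a) = algebraMap K L (θ a) := by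
    simp [hext, hχK]
  have hcomm : ∀ z, θ₁ (χ z) = χ (θ₁ z) := by
    refine RingHom.congr_fun (f := θ₁.comp χ) (g := χ.comp θ₁) ?_
    refine ringHom_ext_of_forall_eq_add_mul hspan (by simp [hext, hχK]) ?_
    simp only [RingHom.comp_apply, hχγ, hθ₁γ, map_add, map_one, hχK]
    ring
  have hχχ : ∀ z, χ (χ z) = z := by
    refine RingHom.congr_fun (f := χ.comp χ) (g := RingHom.id L) ?_
    refine ringHom_ext_of_forall_eq_add_mul hspan (by simp [hχK]) ?_
    simp only [RingHom.comp_apply, hχγ, map_add, map_one, RingHom.id_apply]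
    linear_combination IsTitsEndomorphism.two_eq_zero hθ₁
  refine ⟨hcomm, hextχ, fun z => by simp only [RingHom.comp_apply, hcomm, hχχ, hθ₁],
    fun θ₂ hext₂ hθ₂ => ?_⟩
  obtain ⟨α₂, hα₂, hθ₂γ⟩ :=
    exists_apply_eq_add_of_isTitsEndomorphism hθ hγ hirr hspan hθ₂ hext₂
  rcases IsTitsEndomorphism.eq_or_eq_add_one_of_map_add_self_eq hθ hα hα₂ with rfl | rfl
  · exact .inl <| ringHom_ext_of_forall_eq_add_mul hspan (by simp [hext, hext₂])
      (by rw [hθ₂γ, hθ₁γ])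
  · refine .inr (ringHom_ext_of_forall_eq_add_mul hspan (by simp [hext₂, hextχ]) ?_)
    simp only [RingHom.comp_apply, hθ₂γ, hθ₁γ, map_add, map_one, hχγ, hχK]
    ring

/-- Let `K` be a field of characteristic 2, `θ` a Tits endomorphism of `K`, and
`L = K(γ)` a quadratic extension where `γ² + γ + δ = 0` with `δ ∈ K` (so `γ ∉ K` and
every element of `L` is of the form `a + bγ`). Let `χ` be the nontrivial element of
`Gal(L/K)` (so `χ γ = γ + 1`). If `θ₁` is a Tits endomorphism of `L` extending `θ`,
then `θ₁` commutes with `χ`, `χ ∘ θ₁` is also a Tits endomorphism of `L` extending `θ`,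
and these are the only two extensions of `θ` to a Tits endomorphism of `L`. -/
theorem tits_extensions_pair {K L : Type*} [Field K] [CharP K 2] [Field L]
    [Algebra K L] (θ : K →+* K) (hθ : ∀ x : K, θ (θ x) = x ^ 2)
    (δ : K) (γ : L) (hγ : γ ^ 2 + γ + algebraMap K L δ = 0)
    (hirr : γ ∉ Set.range (algebraMap K L))
    (hspan : ∀ z : L, ∃ a b : K, z = algebraMap K L a + algebraMap K L b * γ)
    (χ : L →+* L) (hχK : ∀ a : K, χ (algebraMap K L a) = algebraMap K L a)
    (hχγ : χ γ = γ + 1)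
    (θ₁ : L →+* L) (hext : ∀ a : K, θ₁ (algebraMap K L a) = algebraMap K L (θ a))
    (hθ₁ : ∀ z : L, θ₁ (θ₁ z) = z ^ 2) :
    (∀ z : L, θ₁ (χ z) = χ (θ₁ z)) ∧
    (∀ a : K, (χ.comp θ₁) (algebraMap K L a) = algebraMap K L (θ a)) ∧
    (∀ z : L, (χ.comp θ₁) ((χ.comp θ₁) z) = z ^ 2) ∧
    (∀ θ₂ : L →+* L,
      (∀ a : K, θ₂ (algebraMap K L a) = algebraMap K L (θ a)) →
      (∀ z : L, θ₂ (θ₂ z) = z ^ 2) → θ₂ = θ₁ ∨ θ₂ = χ.comp θ₁) :=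
  tits_extensions_pair_general θ hθ δ γ hγ hirr hspan χ hχK hχγ θ₁ hext hθ₁
end

section
/- Let P = (K, V, q, θ, t ↦ [t], ·) be a polarity algebra. Then q(u·v) = q(u)·q(v)^θ for all u, v ∈ V. -/
/-!
Combining (R5) and (R6) gives `(uv)(vu) = q(uv) u`, and feeding this back into (R5) yields
`θ(q(uv)) = q(v) q(vu)`. Applying this identity to `(u, v)` and then to `(v, u)`, the Tits
property `θ² = (·)²` turns it into `q(uv)² = q(u) θ(q v) q(uv)`. It remains to cancel
`q(uv)`; when it vanishes, anisotropy forces `uv = 0`, and then (R5) forces `u = 0` or `v = 0`.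
-/

open QuadraticMap

/-- A polarity algebra (De Medts–Segev–Weiss): a field `K` of characteristic 2, an
anisotropic quadratic space `(K, V, q)` whose polar form `f = ∂q` is not identically
zero, a Tits endomorphism `θ` of `K`, a `K`-linear embedding `t ↦ [t]` of the twisted
vector space `[K^θ]` (with scalar action `a • [t] = [a^θ t]`) into the radical of `f`,
and a multiplication on `V` satisfying the axioms (R1)–(R7). -/
structure PolarityAlgebra (K V : Type*) [Field K] [CharP K 2]
    [AddCommGroup V] [Module K V] where
  q : QuadraticForm K V
  anisotropic : q.Anisotropic
  f_ne_zero : ∃ u v : V, polar q u v ≠ 0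
  θ : K →+* K
  tits : ∀ t : K, θ (θ t) = t ^ 2
  br : K → V
  br_add : ∀ s t : K, br (s + t) = br s + br t
  br_smul : ∀ a t : K, a • br t = br (θ a * t)
  br_inj : Function.Injective br
  br_rad : ∀ (t : K) (v : V), polar q (br t) v = 0
  mul : V → V → V
  R1 : ∀ v : V, IsLinearMap K fun x => mul x v
  R2 : ∀ (t : K) (v : V), mul v (br t) = t • v
  R3 : ∀ (t : K) (u v : V), mul u (t • v) = θ t • mul u v
  R4 : ∀ (t : K) (v : V), mul (br t) v = br (t * q v)
  R5 : ∀ u v : V, mul (mul u v) v = θ (q v) • u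
  R6 : ∀ u v : V, mul v (mul u v) = q v • mul v u
  R7 : ∀ u v w : V, mul u (v + w) = mul u v + mul u w + br (polar q (mul v u) w)

variable {K V : Type*} [Field K] [CharP K 2] [AddCommGroup V] [Module K V]

namespace PolarityAlgebra

variable (P : PolarityAlgebra K V)

lemma mul_zero (u : V) : P.mul u 0 = 0 := by
  simpa using P.R3 0 u 0

lemma zero_mul (v : V) : P.mul 0 v = 0 :=
  (P.R1 v).map_zero

lemma q_eq_zero_iff {v : V} : P.q v = 0 ↔ v = 0 :=
  P.anisotropic.eq_zero_iff

lemma mul_mul_mul_swap (u v : V) :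
    P.mul (P.mul u v) (P.mul v u) = P.q (P.mul u v) • u := by
  rcases eq_or_ne v 0 with rfl | hv
  · simp [P.mul_zero, P.zero_mul]
  have hθ : P.θ (P.q v) ≠ 0 := (map_ne_zero P.θ).mpr (mt P.q_eq_zero_iff.mp hv)
  -- expand `(uv)(v(uv))` once by (R6) on the inside and once by (R6) on the outside
  have h : P.θ (P.q v) • P.mul (P.mul u v) (P.mul v u)
      = P.θ (P.q v) • (P.q (P.mul u v) • u) := by
    calc P.θ (P.q v) • P.mul (P.mul u v) (P.mul v u)
        = P.mul (P.mul u v) (P.mul v (P.mul u v)) := by rw [P.R6 u v, P.R3]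
      _ = P.θ (P.q v) • (P.q (P.mul u v) • u) := by rw [P.R6, P.R5, smul_comm]
  exact smul_right_injective V hθ h

lemma θ_q_mul (u v : V) : P.θ (P.q (P.mul u v)) = P.q v * P.q (P.mul v u) := by
  rcases eq_or_ne v 0 with rfl | hv
  · simp [P.mul_zero]
  apply smul_left_injective K hv
  calc P.θ (P.q (P.mul u v)) • v
      = P.mul (P.mul v (P.mul u v)) (P.mul u v) := (P.R5 v _).symm
    _ = (P.q v * P.q (P.mul v u)) • v := by
      rw [P.R6, (P.R1 _).map_smul, mul_mul_mul_swap, smul_smul]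

lemma q_mul_sq (u v : V) :
    P.q (P.mul u v) ^ 2 = P.q u * P.θ (P.q v) * P.q (P.mul u v) := by
  calc P.q (P.mul u v) ^ 2 = P.θ (P.θ (P.q (P.mul u v))) := (P.tits _).symm
    _ = P.θ (P.q v) * P.θ (P.q (P.mul v u)) := by rw [θ_q_mul, map_mul]
    _ = P.q u * P.θ (P.q v) * P.q (P.mul u v) := by rw [θ_q_mul]; ring

lemma mul_eq_zero_iff {u v : V} : P.mul u v = 0 ↔ u = 0 ∨ v = 0 := by
  refine ⟨fun h => ?_, ?_⟩
  · have h5 := P.R5 u v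
    rw [h, P.zero_mul, eq_comm, smul_eq_zero, map_eq_zero, q_eq_zero_iff] at h5
    exact h5.symm
  · rintro (rfl | rfl)
    exacts [P.zero_mul v, P.mul_zero u]

end PolarityAlgebra

/-- In a polarity algebra, the quadratic form is multiplicative with a twist:
`q(u·v) = q(u) q(v)^θ`. -/
theorem polarityAlgebra_q_mul (P : PolarityAlgebra K V) (u v : V) :
    P.q (P.mul u v) = P.q u * P.θ (P.q v) := by
  rcases eq_or_ne (P.q (P.mul u v)) 0 with h0 | hne
  · rcases P.mul_eq_zero_iff.mp (P.q_eq_zero_iff.mp h0) with rfl | rfl <;> simp [h0]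
  exact mul_right_cancel₀ hne (by rw [← _root_.sq, P.q_mul_sq])
end

section
/- Let P = (K, V, q, θ, t ↦ [t], ·) be a polarity algebra with f = ∂q. Then f(u·v, z·w) + f(u·w, z·v) = f(u,z)·f(v,w)^θ for all u, v, w, z ∈ V. -/
open QuadraticMap

variable {K V : Type*} [Field K] [CharP K 2] [AddCommGroup V] [Module K V]

/-! Linearizing (R5) in its second argument shows `(z·v)·w + (z·w)·v ≡ f(v,w)^θ z` modulo `[K]`.
Pairing this with `u` kills the `[K]`-term, as `[K]` lies in the radical of `f`, and the symmetry
`f(x·a, y) = f(y·a, x)`, a consequence of (R7), turns the pairing into the left-hand side. -/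

namespace PolarityAlgebra

variable (P : PolarityAlgebra K V)

theorem mul_add_left (x y v : V) : P.mul (x + y) v = P.mul x v + P.mul y v :=
  (P.R1 v).map_add x y

theorem br_zero : P.br 0 = 0 := by
  simpa using P.br_add 0 0

theorem br_add_self (t : K) : P.br t + P.br t = 0 := by
  rw [← P.br_add, CharTwo.add_self_eq_zero, P.br_zero]

theorem polar_mul_left_comm (a x y : V) :
    polar P.q (P.mul x a) y = polar P.q (P.mul y a) x := by
  have h := (P.R7 a x y).symm.trans (add_comm x y ▸ P.R7 a y x)
  rw [add_comm (P.mul a y)] at h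
  exact P.br_inj (add_left_cancel h)

theorem mul_mul_self_add (z v w : V) :
    P.mul (P.mul z v) (v + w) =
      P.θ (P.q v) • z + P.mul (P.mul z v) w + P.br (P.q v * polar P.q (P.mul v z) w) := by
  rw [P.R7, P.R5, P.R6, polar_smul_left, smul_eq_mul]

theorem mul_mul_add_mul_mul (z v w : V) :
    P.mul (P.mul z v) w + P.mul (P.mul z w) v =
      P.θ (polar P.q v w) • z + P.br (polar P.q (P.mul v z) w * polar P.q v w) := by
  have h := P.R5 z (v + w)
  have hw := P.mul_mul_self_add z w v
  rw [add_comm w v, P.polar_mul_left_comm z w v] at hw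
  rw [P.R7 z v w, P.mul_add_left, P.mul_add_left, P.mul_mul_self_add, hw, P.R4,
    QuadraticMap.map_add P.q v w, map_add, map_add, add_smul, add_smul, mul_add, mul_add,
    P.br_add, P.br_add, mul_comm _ (P.q v), mul_comm _ (P.q w)] at h
  linear_combination (norm := module) h - P.br_add_self (P.q v * polar P.q (P.mul v z) w)
    - P.br_add_self (P.q w * polar P.q (P.mul v z) w)
    - P.br_add_self (polar P.q (P.mul v z) w * polar P.q v w)

end PolarityAlgebra

/-- In a polarity algebra, `f(u·v, z·w) + f(u·w, z·v) = f(u,z) f(v,w)^θ`. -/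
theorem polarityAlgebra_polar_exchange (P : PolarityAlgebra K V) (u v w z : V) :
    polar P.q (P.mul u v) (P.mul z w) + polar P.q (P.mul u w) (P.mul z v)
      = polar P.q u z * P.θ (polar P.q v w) := by
  calc polar P.q (P.mul u v) (P.mul z w) + polar P.q (P.mul u w) (P.mul z v)
      = polar P.q (P.mul (P.mul z w) v + P.mul (P.mul z v) w) u := by
        rw [P.polar_mul_left_comm v, P.polar_mul_left_comm w, polar_add_left, add_comm]
    _ = polar P.q u z * P.θ (polar P.q v w) := by
        rw [add_comm, P.mul_mul_add_mul_mul, polar_add_left, P.br_rad, add_zero,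
          polar_smul_left, smul_eq_mul, polar_comm P.q z u, mul_comm]
end
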